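/- arXiv:2202.07053 — 4 statements merged into one kernel-verified Lean document; each statement's English description precedes it below -/
import Mathlib

section
/- Let $\bar{x} \in \{0,1\}^n$, $\bar{y} \in \{0,1\}^m$, $\bar{z} \in \{0,1\}^l$, and let $n_{\bar{x}}, n_{\bar{y}}, n_{\bar{z}}$ denote the number of ones in $\bar{x}, \bar{y}, \bar{z}$ respectively. For every $(x,y,z) \in \{0,1\}^{n+m+l}$ with $(x,y,z) \neq (\bar{x},\bar{y},\bar{z})$, the number of triples $(i,j,k) \in [n]\times[m]\times[l]$ with $\bar{x}_i\bar{y}_j\bar{z}_k \neq x_i y_j z_k$ is at least $\min\{n_{\bar{x}} n_{\bar{y}}, n_{\bar{x}} n_{\bar{z}}, n_{\bar{y}} n_{\bar{z}}\}$. -/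
/-- Number of triples `(i,j,k)` where the rank-one tensors of `(xb,yb,zb)` and `(x,y,z)`
disagree. -/
def mismatchCount {n m l : ℕ} (xb : Fin n → Bool) (yb : Fin m → Bool) (zb : Fin l → Bool)
    (x : Fin n → Bool) (y : Fin m → Bool) (z : Fin l → Bool) : ℕ :=
  (Finset.univ.filter (fun e : Fin n × Fin m × Fin l =>
    (xb e.1 && yb e.2.1 && zb e.2.2) ≠ (x e.1 && y e.2.1 && z e.2.2))).card

/-- Number of ones in a binary vector. -/
def numOnes {n : ℕ} (v : Fin n → Bool) : ℕ :=
  (Finset.univ.filter (fun i => v i = true)).card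

/-!
Fix a coordinate where the two triples differ, say `xb i ≠ x i`. If `xb i = 1` and `x i = 0`,
every triple `(i, j, k)` with `yb j = zb k = 1` is a mismatch, giving `n_yb n_zb` of them.
So the bound holds unless `xb ≤ x`, `yb ≤ y`, `zb ≤ z` pointwise. In that case some coordinate
has `x i = 1` and `xb i = 0`, and the same count with the roles of the two triples exchanged
gives at least `n_y n_z ≥ n_yb n_zb` mismatches.
-/

open Finset

section
variable {n m l : ℕ}

@[gcongr]
lemma numOnes_mono {v w : Fin n → Bool} (h : v ≤ w) : numOnes v ≤ numOnes w :=
  card_le_card <| monotone_filter_right _ fun i _ hi => Bool.le_iff_imp.mp (h i) hi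

lemma exists_true_false_of_not_le {v w : Fin n → Bool} (h : ¬ v ≤ w) :
    ∃ i, v i = true ∧ w i = false := by
  simpa [Pi.le_def, Bool.lt_iff, and_comm] using h

variable {xb : Fin n → Bool} {yb : Fin m → Bool} {zb : Fin l → Bool}
  {x : Fin n → Bool} {y : Fin m → Bool} {z : Fin l → Bool}

lemma mismatchCount_comm : mismatchCount xb yb zb x y z = mismatchCount x y z xb yb zb := by
  simp only [mismatchCount, ne_comm]

lemma mismatchCount_rotate : mismatchCount xb yb zb x y z = mismatchCount yb zb xb y z x :=
  card_equiv ((Equiv.prodComm _ _).trans (Equiv.prodAssoc _ _ _)) fun e => by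
    simp [Bool.and_comm, Bool.and_left_comm]

lemma numOnes_mul_numOnes_le_mismatchCount {i : Fin n} (hxb : xb i = true) (hx : x i = false) :
    numOnes yb * numOnes zb ≤ mismatchCount xb yb zb x y z := by
  calc numOnes yb * numOnes zb
        = #({i} ×ˢ ({j | yb j} : Finset _) ×ˢ ({k | zb k} : Finset _)) := by
        simp [numOnes, card_product]
    _ ≤ mismatchCount xb yb zb x y z := card_le_card fun e he => by
        simp only [mem_product, mem_singleton, mem_filter, mem_univ, true_and] at he
        simp [he.1, he.2.1, he.2.2, hxb, hx]

lemma min_le_mismatchCount_of_not_le (h : ¬ xb ≤ x ∨ ¬ yb ≤ y ∨ ¬ zb ≤ z) :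
    min (min (numOnes xb * numOnes yb) (numOnes xb * numOnes zb)) (numOnes yb * numOnes zb) ≤
      mismatchCount xb yb zb x y z := by
  rcases h with h | h | h <;> obtain ⟨i, hb, h⟩ := exists_true_false_of_not_le h
  · exact (min_le_right _ _).trans (numOnes_mul_numOnes_le_mismatchCount hb h)
  · rw [mismatchCount_rotate, mul_comm (numOnes xb) (numOnes zb)]
    exact (min_le_left _ _).trans <| (min_le_right _ _).trans <|
      numOnes_mul_numOnes_le_mismatchCount hb h
  · rw [mismatchCount_rotate, mismatchCount_rotate]
    exact (min_le_left _ _).trans <| (min_le_left _ _).trans <|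
      numOnes_mul_numOnes_le_mismatchCount hb h

lemma min_le_mismatchCount_of_le (hx : xb ≤ x) (hy : yb ≤ y) (hz : zb ≤ z)
    (h : ¬ x ≤ xb ∨ ¬ y ≤ yb ∨ ¬ z ≤ zb) :
    min (min (numOnes xb * numOnes yb) (numOnes xb * numOnes zb)) (numOnes yb * numOnes zb) ≤
      mismatchCount xb yb zb x y z :=
  calc _ ≤ min (min (numOnes x * numOnes y) (numOnes x * numOnes z)) (numOnes y * numOnes z) := by
        gcongr
    _ ≤ mismatchCount x y z xb yb zb := min_le_mismatchCount_of_not_le h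
    _ = mismatchCount xb yb zb x y z := mismatchCount_comm

end

theorem stmt1 {n m l : ℕ} (xb : Fin n → Bool) (yb : Fin m → Bool) (zb : Fin l → Bool)
    (x : Fin n → Bool) (y : Fin m → Bool) (z : Fin l → Bool)
    (hne : ¬(x = xb ∧ y = yb ∧ z = zb)) :
    min (min (numOnes xb * numOnes yb) (numOnes xb * numOnes zb))
        (numOnes yb * numOnes zb) ≤ mismatchCount xb yb zb x y z := by
  by_cases hle : xb ≤ x ∧ yb ≤ y ∧ zb ≤ z
  · obtain ⟨hx, hy, hz⟩ := hle
    refine min_le_mismatchCount_of_le hx hy hz ?_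
    contrapose! hne
    exact ⟨hne.1.antisymm hx, hne.2.1.antisymm hy, hne.2.2.antisymm hz⟩
  · exact min_le_mismatchCount_of_not_le (by tauto)
end

section
/- Let $X_1, X_2$ be nonnegative independent real random variables with $\mathbb{E}[X_1] > 0$ and $\mathbb{E}[X_2] > 0$, and suppose for every $t > 0$ that $\Pr[|X_1 - \mathbb{E}[X_1]| \ge t] \le f_1(t)$ and $\Pr[|X_2 - \mathbb{E}[X_2]| \ge t] \le f_2(t)$. Then for every $t > 0$, $\Pr[|X_1 X_2 - \mathbb{E}[X_1 X_2]| \ge t] \le f_1\left(\frac{t}{\sqrt{t \mathbb{E}[X_2]/\mathbb{E}[X_1]} + 2\mathbb{E}[X_2]}\right) + f_2\left(\frac{t}{\sqrt{t \mathbb{E}[X_1]/\mathbb{E}[X_2]} + 2\mathbb{E}[X_1]}\right)$. -/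
/-!
Write `X₁ X₂ - m₁ m₂ = (X₁ - m₁)(X₂ - m₂) + m₁ (X₂ - m₂) + m₂ (X₁ - m₁)`, where `m₁ m₂ = 𝔼[X₁ X₂]`
by independence. If `|X₁ - m₁| < s₁` and `|X₂ - m₂| < s₂`, the product therefore deviates by less
than `s₁ s₂ + m₁ s₂ + m₂ s₁`, so a union bound reduces the claim to choosing thresholds with
`s₁ s₂ + m₁ s₂ + m₂ s₁ ≤ t`. The thresholds `s₁ = t / (a + 2 m₂)`, `s₂ = t / (b + 2 m₁)` do this
whenever `a b = t`; the statement takes `a = √(t m₂ / m₁)` and `b = √(t m₁ / m₂)`.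
-/

open MeasureTheory ProbabilityTheory

lemma abs_mul_sub_mul_le {x y m n : ℝ} (hm : 0 ≤ m) (hn : 0 ≤ n) :
    |x * y - m * n| ≤ |x - m| * |y - n| + m * |y - n| + n * |x - m| := by
  calc |x * y - m * n| = |(x - m) * (y - n) + m * (y - n) + n * (x - m)| := by ring_nf
    _ ≤ |(x - m) * (y - n)| + |m * (y - n)| + |n * (x - m)| := abs_add_three _ _ _
    _ = |x - m| * |y - n| + m * |y - n| + n * |x - m| := by
      rw [abs_mul, abs_mul, abs_mul, abs_of_nonneg hm, abs_of_nonneg hn]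

lemma deviation_thresholds_le {a b m n t : ℝ} (ha : 0 < a) (hb : 0 < b) (hm : 0 ≤ m)
    (hn : 0 ≤ n) (hab : a * b = t) :
    t / (a + 2 * n) * (t / (b + 2 * m)) + m * (t / (b + 2 * m)) + n * (t / (a + 2 * n)) ≤ t := by
  have hA : 0 < a + 2 * n := by positivity
  have hB : 0 < b + 2 * m := by positivity
  have key : (t / (a + 2 * n) * (t / (b + 2 * m)) + m * (t / (b + 2 * m)) + n * (t / (a + 2 * n)))
      * ((a + 2 * n) * (b + 2 * m)) = t * ((a + 2 * n) * (b + 2 * m)) - t * (a * m + b * n) := by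
    field_simp
    rw [← hab]
    ring
  refine le_of_mul_le_mul_right ?_ (mul_pos hA hB)
  rw [key, sub_le_self_iff]
  have : 0 < t := hab ▸ mul_pos ha hb
  positivity

lemma measure_le_abs_mul_sub_mul_le {Ω : Type*} [MeasurableSpace Ω] (μ : Measure Ω)
    {X Y : Ω → ℝ} {m n s₁ s₂ t : ℝ} (hm : 0 ≤ m) (hn : 0 ≤ n)
    (hs : s₁ * s₂ + m * s₂ + n * s₁ ≤ t) :
    μ {ω | t ≤ |X ω * Y ω - m * n|} ≤ μ {ω | s₁ ≤ |X ω - m|} + μ {ω | s₂ ≤ |Y ω - n|} := by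
  refine (measure_mono fun ω hω ↦ ?_).trans (measure_union_le _ _)
  by_contra hc
  simp only [Set.mem_union, Set.mem_ofPred_eq, not_or, not_le] at hc hω
  obtain ⟨hX, hY⟩ := hc
  have hprod : |X ω - m| * |Y ω - n| < s₁ * s₂ :=
    mul_lt_mul'' hX hY (abs_nonneg _) (abs_nonneg _)
  linarith [abs_mul_sub_mul_le (x := X ω) (y := Y ω) hm hn,
    mul_le_mul_of_nonneg_left hY.le hm, mul_le_mul_of_nonneg_left hX.le hn]

theorem stmt4_general {Ω : Type*} [MeasurableSpace Ω] (μ : Measure Ω)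
    (X1 X2 : Ω → ℝ)
    (hind : IndepFun X1 X2 μ)
    (hint1 : Integrable X1 μ) (hint2 : Integrable X2 μ)
    (hm1 : 0 < ∫ ω, X1 ω ∂μ) (hm2 : 0 < ∫ ω, X2 ω ∂μ)
    (f1 f2 : ℝ → ℝ)
    (hf1 : ∀ t > 0, μ {ω | t ≤ |X1 ω - ∫ ω', X1 ω' ∂μ|} ≤ ENNReal.ofReal (f1 t))
    (hf2 : ∀ t > 0, μ {ω | t ≤ |X2 ω - ∫ ω', X2 ω' ∂μ|} ≤ ENNReal.ofReal (f2 t))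
    (t : ℝ) (ht : 0 < t) :
    μ {ω | t ≤ |X1 ω * X2 ω - ∫ ω', X1 ω' * X2 ω' ∂μ|}
      ≤ ENNReal.ofReal
          (f1 (t / (Real.sqrt (t * (∫ ω', X2 ω' ∂μ) / ∫ ω', X1 ω' ∂μ) + 2 * ∫ ω', X2 ω' ∂μ)))
        + ENNReal.ofReal
          (f2 (t / (Real.sqrt (t * (∫ ω', X1 ω' ∂μ) / ∫ ω', X2 ω' ∂μ) + 2 * ∫ ω', X1 ω' ∂μ))) := by
  set m1 := ∫ ω, X1 ω ∂μ
  set m2 := ∫ ω, X2 ω ∂μ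
  have hmean : ∫ ω, X1 ω * X2 ω ∂μ = m1 * m2 :=
    hind.integral_fun_mul_eq_mul_integral hint1.aestronglyMeasurable hint2.aestronglyMeasurable
  have hsqrt : √(t * m2 / m1) * √(t * m1 / m2) = t := by
    rw [← Real.sqrt_mul (by positivity), show t * m2 / m1 * (t * m1 / m2) = t * t by field_simp,
      Real.sqrt_mul_self ht.le]
  rw [hmean]
  refine (measure_le_abs_mul_sub_mul_le μ hm1.le hm2.le
    (deviation_thresholds_le (by positivity) (by positivity) hm1.le hm2.le hsqrt)).trans ?_
  exact add_le_add (hf1 _ (by positivity)) (hf2 _ (by positivity))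

theorem stmt4 {Ω : Type*} [MeasurableSpace Ω] (μ : Measure Ω) [IsProbabilityMeasure μ]
    (X1 X2 : Ω → ℝ) (h1 : ∀ ω, 0 ≤ X1 ω) (h2 : ∀ ω, 0 ≤ X2 ω)
    (hind : IndepFun X1 X2 μ)
    (hint1 : Integrable X1 μ) (hint2 : Integrable X2 μ)
    (hint12 : Integrable (fun ω => X1 ω * X2 ω) μ)
    (hm1 : 0 < ∫ ω, X1 ω ∂μ) (hm2 : 0 < ∫ ω, X2 ω ∂μ)
    (f1 f2 : ℝ → ℝ)
    (hf1 : ∀ t > 0, μ {ω | t ≤ |X1 ω - ∫ ω', X1 ω' ∂μ|} ≤ ENNReal.ofReal (f1 t))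
    (hf2 : ∀ t > 0, μ {ω | t ≤ |X2 ω - ∫ ω', X2 ω' ∂μ|} ≤ ENNReal.ofReal (f2 t))
    (t : ℝ) (ht : 0 < t) :
    μ {ω | t ≤ |X1 ω * X2 ω - ∫ ω', X1 ω' * X2 ω' ∂μ|}
      ≤ ENNReal.ofReal
          (f1 (t / (Real.sqrt (t * (∫ ω', X2 ω' ∂μ) / ∫ ω', X1 ω' ∂μ) + 2 * ∫ ω', X2 ω' ∂μ)))
        + ENNReal.ofReal
          (f2 (t / (Real.sqrt (t * (∫ ω', X1 ω' ∂μ) / ∫ ω', X2 ω' ∂μ) + 2 * ∫ ω', X1 ω' ∂μ))) :=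
  stmt4_general μ X1 X2 hind hint1 hint2 hm1 hm2 f1 f2 hf1 hf2 t ht
end

section
/- Let $a, b, t > 0$ and set $\beta = 2 + \sqrt{t/(ab)}$. If real numbers $x_1 < a + \frac{t}{\beta b}$ and $x_2 < b + \frac{t}{\beta a}$ with $x_1, x_2 \ge 0$, then $x_1 x_2 < ab + t$. -/
/-!
With `u = t / (a b)` and `β = 2 + √u`, the product of the two bounds expands to
`a b + t (2 / β + u / β²)`, and `2 / β + u / β² ≤ 1` is equivalent to `2 β + u ≤ β²`,
i.e. to `4 + 2 √u ≤ 4 + 4 √u`.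
-/

lemma add_div_mul_add_div_eq {a b β : ℝ} (t : ℝ) (ha : a ≠ 0) (hb : b ≠ 0) (hβ : β ≠ 0) :
    (a + t / (β * b)) * (b + t / (β * a)) = a * b + t * (2 / β + t / (a * b) / β ^ 2) := by
  field_simp
  ring

lemma two_div_add_div_sq_le_one {u : ℝ} (hu : 0 ≤ u) :
    2 / (2 + √u) + u / (2 + √u) ^ 2 ≤ 1 := by
  obtain ⟨s, hs, rfl⟩ : ∃ s, 0 ≤ s ∧ u = s ^ 2 := ⟨√u, Real.sqrt_nonneg u, (Real.sq_sqrt hu).symm⟩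
  rw [Real.sqrt_sq hs, div_add_div _ _ (by positivity) (by positivity), div_le_one (by positivity)]
  nlinarith

theorem stmt5 (a b t : ℝ) (ha : 0 < a) (hb : 0 < b) (ht : 0 < t)
    (x1 x2 : ℝ) (hx1nn : 0 ≤ x1) (hx2nn : 0 ≤ x2)
    (hx1 : x1 < a + t / ((2 + Real.sqrt (t / (a * b))) * b))
    (hx2 : x2 < b + t / ((2 + Real.sqrt (t / (a * b))) * a)) :
    x1 * x2 < a * b + t := by
  have hβ : 0 < 2 + √(t / (a * b)) := by positivity
  calc x1 * x2 < (a + t / ((2 + √(t / (a * b))) * b)) * (b + t / ((2 + √(t / (a * b))) * a)) :=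
        mul_lt_mul'' hx1 hx2 hx1nn hx2nn
    _ = a * b + t * (2 / (2 + √(t / (a * b))) + t / (a * b) / (2 + √(t / (a * b))) ^ 2) :=
        add_div_mul_add_div_eq t ha.ne' hb.ne' hβ.ne'
    _ ≤ a * b + t * 1 := by
        gcongr
        exact two_div_add_div_sq_le_one (by positivity)
    _ = a * b + t := by ring
end

section
/- Let $p$ be a constant with $p > 1/2$ and let $r_{\bar{x}}, r_{\bar{y}}, r_{\bar{z}} \in (0,1]$ be positive constants. Under the fully-random corruption model with ground truth $\bar{W} = \bar{x} \otimes \bar{y} \otimes \bar{z}$ where $\bar{x},\bar{y},\bar{z}$ have density ratios $r_{\bar{x}}, r_{\bar{y}}, r_{\bar{z}}$, the probability that the rank-one Boolean tensor factorization problem $\min_{x,y,z \in \{0,1\}} \|G - x \otimes y \otimes z\|^2$ recovers the ground truth tends to $0$ as $n, m, l \to \infty$. In fact, this probability is at most $\exp(-2 \min\{r_{\bar{x}} n\, r_{\bar{y}} m,\; r_{\bar{x}} n\, r_{\bar{z}} l,\; r_{\bar{y}} m\, r_{\bar{z}} l\}(p - 1/2)^2)$. -/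
/-!
If the ground truth `x̄ ⊗ ȳ ⊗ z̄` is the unique minimiser, it does at least as well as the
competitor `x̄ ⊗ ȳ ⊗ 0`. The two tensors differ exactly on the support `D` of the ground truth, so
this forces at most half of the entries in `D` to be corrupted. Since each entry is corrupted
independently with probability `p > 1/2`, Hoeffding's inequality bounds the probability of this by
`exp (-2 |D| (p - 1/2)²)`, and `|D| = (r_x̄ n)(r_ȳ m)(r_z̄ l)` is at least the smallest of the
three pairwise products.
-/

open MeasureTheory ProbabilityTheory Finset

def objCount {n m l : ℕ} (g : Fin n × Fin m × Fin l → Bool)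
    (u : Fin n → Bool) (v : Fin m → Bool) (w : Fin l → Bool) : ℕ :=
  (Finset.univ.filter (fun e : Fin n × Fin m × Fin l =>
    (u e.1 && v e.2.1 && w e.2.2) ≠ g e)).card

section Hoeffding

variable {Ω : Type*} [MeasurableSpace Ω] {μ : Measure Ω} [IsProbabilityMeasure μ]

lemma hasSubgaussianMGF_sub_ite {B : Ω → Bool} (hB : Measurable B) {p : ℝ} (hp : 0 ≤ p)
    (hber : μ {ω | B ω = true} = ENNReal.ofReal p) :
    HasSubgaussianMGF (fun ω => p - if B ω then 1 else 0) (1 / 4) μ := by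
  have hY : Measurable fun ω => if B ω then (1 : ℝ) else 0 :=
    (measurable_of_countable fun b : Bool => if b then (1 : ℝ) else 0).comp hB
  have hYint : ∫ ω, (if B ω then (1 : ℝ) else 0) ∂μ = p := by
    have hset : MeasurableSet {ω | B ω = true} := hB (measurableSet_singleton true)
    rw [← ENNReal.toReal_ofReal hp, ← hber, ← measureReal_def, ← integral_indicator_one hset]
    congr 1 with ω
    by_cases h : B ω <;> simp [h]
  have hmean : ∫ ω, (p - if B ω then (1 : ℝ) else 0) ∂μ = 0 := by
    have hYbdd : Integrable (fun ω => if B ω then (1 : ℝ) else 0) μ :=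
      .of_bound hY.aestronglyMeasurable 1 (ae_of_all _ fun ω => by by_cases h : B ω <;> simp [h])
    rw [integral_sub (integrable_const p) hYbdd, hYint, integral_const, probReal_univ, one_smul,
      sub_self]
  have hIcc : ∀ᵐ ω ∂μ, (p - if B ω then (1 : ℝ) else 0) ∈ Set.Icc (p - 1) p :=
    ae_of_all _ fun ω => by by_cases h : B ω <;> simp [h]
  convert hasSubgaussianMGF_of_mem_Icc_of_integral_eq_zero (hY.const_sub p).aemeasurable hIcc hmean
    using 1
  norm_num

lemma measure_two_mul_card_le_le_exp {ι : Type*} {C : ι → Ω → Bool} {p : ℝ} (hp : 1 / 2 ≤ p)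
    (hmeas : ∀ i, Measurable (C i)) (hber : ∀ i, μ {ω | C i ω = true} = ENNReal.ofReal p)
    (hind : iIndepFun C μ) (s : Finset ι) :
    μ {ω | 2 * #{i ∈ s | C i ω = true} ≤ #s}
      ≤ ENNReal.ofReal (Real.exp (-2 * #s * (p - 1 / 2) ^ 2)) := by
  set X : ι → Ω → ℝ := fun i ω => p - if C i ω then 1 else 0
  have hXind : iIndepFun X μ :=
    hind.comp (fun _ b => p - if b then (1 : ℝ) else 0) (fun _ => measurable_of_countable _)
  have hsum (ω : Ω) :
      ∑ i ∈ s, X i ω = #s * (p - 1 / 2) + (#s - 2 * #{i ∈ s | C i ω = true}) / 2 := by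
    simp only [X, Finset.sum_sub_distrib, Finset.sum_const, nsmul_eq_mul, Finset.sum_boole]
    ring
  have hHoeffding := HasSubgaussianMGF.measure_sum_ge_le_of_iIndepFun hXind (s := s)
    (fun i _ => hasSubgaussianMGF_sub_ite (hmeas i) (by linarith) (hber i))
    (ε := #s * (p - 1 / 2)) (mul_nonneg (Nat.cast_nonneg _) (by linarith))
  rw [← ofReal_measureReal]
  refine ENNReal.ofReal_le_ofReal
    ((measureReal_mono fun ω hω => ?_).trans (hHoeffding.trans_eq ?_))
  · have h2 : (2 * #{i ∈ s | C i ω = true} : ℝ) ≤ #s := by exact_mod_cast hω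
    simp only [Set.mem_ofPred_eq, hsum]
    linarith
  · congr 1
    simp only [Finset.sum_const, nsmul_eq_mul]
    push_cast
    rcases (#s).eq_zero_or_pos with h | h
    · simp [h]
    · field_simp
      ring

end Hoeffding

section Flips

variable {α : Type*} [Fintype α] (c t : α → Bool)

lemma card_filter_ne_xor_self : #{e | t e ≠ xor (c e) (t e)} = #{e | c e} := by
  congr 1 with e
  simp only [Finset.mem_filter, Finset.mem_univ, true_and]
  cases c e <;> cases t e <;> decide

lemma card_filter_false_ne_xor : #{e | false ≠ xor (c e) (t e)} = #{e | c e ≠ t e} := by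
  congr 1 with e
  simp only [Finset.mem_filter, Finset.mem_univ, true_and]
  cases c e <;> cases t e <;> decide

lemma two_mul_card_filter_and_add_card_filter_ne :
    2 * #{e ∈ {e | t e} | c e} + #{e | c e ≠ t e} = #{e | c e} + #{e | t e} := by
  simp only [Finset.filter_filter, Finset.card_filter, Finset.mul_sum, ← Finset.sum_add_distrib]
  refine Finset.sum_congr rfl fun e _ => ?_
  cases c e <;> cases t e <;> rfl

end Flips

section RankOne

variable {n m l : ℕ} (x : Fin n → Bool) (y : Fin m → Bool) (z : Fin l → Bool)

def rankOne (e : Fin n × Fin m × Fin l) : Bool := x e.1 && y e.2.1 && z e.2.2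

lemma card_filter_rankOne :
    #{e | rankOne x y z e} = #{i | x i} * #{j | y j} * #{k | z k} := by
  rw [mul_assoc, ← Finset.card_product, ← Finset.card_product]
  congr 1
  ext e
  simp [rankOne, and_assoc]

lemma two_mul_card_le_of_objCount_le (c : Fin n × Fin m × Fin l → Bool)
    (h : objCount (fun e => xor (c e) (rankOne x y z e)) x y z
      ≤ objCount (fun e => xor (c e) (rankOne x y z e)) x y (fun _ => false)) :
    2 * #{e ∈ {e | rankOne x y z e} | c e} ≤ #{e | rankOne x y z e} := by
  have hself : objCount (fun e => xor (c e) (rankOne x y z e)) x y z = #{e | c e} :=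
    card_filter_ne_xor_self c (rankOne x y z)
  have hzero : objCount (fun e => xor (c e) (rankOne x y z e)) x y (fun _ => false)
      = #{e | c e ≠ rankOne x y z e} := by
    simp only [objCount, Bool.and_false]
    exact card_filter_false_ne_xor c (rankOne x y z)
  have := two_mul_card_filter_and_add_card_filter_ne c (rankOne x y z)
  omega

end RankOne

lemma Nat.min_min_mul_le_mul_mul (a b c : ℕ) :
    min (min (a * b) (a * c)) (b * c) ≤ a * b * c := by
  rcases c.eq_zero_or_pos with rfl | hc
  · simp
  · exact (min_le_left _ _).trans ((min_le_left _ _).trans (Nat.le_mul_of_pos_right _ hc))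

theorem stmt19_general {Ω : Type*} [MeasurableSpace Ω] (μ : Measure Ω) [IsProbabilityMeasure μ]
    {n m l : ℕ}
    (p : ℝ) (hp : 1 / 2 < p)
    (rx ry rz : ℝ)
    (xb : Fin n → Bool) (yb : Fin m → Bool) (zb : Fin l → Bool)
    (hrx : ((Finset.univ.filter (fun i => xb i = true)).card : ℝ) = rx * n)
    (hry : ((Finset.univ.filter (fun j => yb j = true)).card : ℝ) = ry * m)
    (hrz : ((Finset.univ.filter (fun k => zb k = true)).card : ℝ) = rz * l)
    (C : Fin n × Fin m × Fin l → Ω → Bool)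
    (hmeas : ∀ e, Measurable (C e))
    (hber : ∀ e, μ {ω | C e ω = true} = ENNReal.ofReal p)
    (hind : iIndepFun C μ) :
    μ {ω | ∀ x y z, ¬(x = xb ∧ y = yb ∧ z = zb) →
          objCount (fun e => xor (C e ω) (xb e.1 && yb e.2.1 && zb e.2.2)) xb yb zb
            < objCount (fun e => xor (C e ω) (xb e.1 && yb e.2.1 && zb e.2.2)) x y z}
      ≤ ENNReal.ofReal
          (Real.exp (-2 * min (min (rx * n * (ry * m)) (rx * n * (rz * l))) (ry * m * (rz * l))
            * (p - 1 / 2) ^ 2)) := by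
  set D := #{e | rankOne xb yb zb e}
  have hmin : min (min (rx * n * (ry * m)) (rx * n * (rz * l))) (ry * m * (rz * l)) ≤ (D : ℝ) := by
    rw [← hrx, ← hry, ← hrz]
    exact_mod_cast (Nat.min_min_mul_le_mul_mul _ _ _).trans_eq (card_filter_rankOne xb yb zb).symm
  calc _ ≤ μ {ω | 2 * #{e ∈ {e | rankOne xb yb zb e} | C e ω = true} ≤ D} := by
        refine measure_mono fun ω hω => two_mul_card_le_of_objCount_le xb yb zb (C · ω) ?_
        -- the competitor `(xb, yb, 0)` is the ground truth itself when `zb = 0`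
        by_cases htruth : xb = xb ∧ yb = yb ∧ (fun _ => false) = zb
        · rw [htruth.2.2]
        · exact (hω _ _ _ htruth).le
    _ ≤ ENNReal.ofReal (Real.exp (-2 * D * (p - 1 / 2) ^ 2)) :=
      measure_two_mul_card_le_le_exp hp.le hmeas hber hind _
    _ ≤ _ := ENNReal.ofReal_le_ofReal <| Real.exp_le_exp.mpr <| by
      nlinarith [sq_nonneg (p - 1 / 2)]

/-- Fully-random corruption model with constant corruption probability `p > 1/2` and ground
truth of density ratios `rx, ry, rz ∈ (0,1]`:  the probability that rank-one Boolean tensor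
factorization recovers the ground truth (i.e. that the ground truth is the unique minimizer
of the objective) is at most
`exp(-2 min{rx n · ry m, rx n · rz l, ry m · rz l} (p - 1/2)^2)`,
which tends to `0` as `n, m, l → ∞`. -/
theorem stmt19 {Ω : Type*} [MeasurableSpace Ω] (μ : Measure Ω) [IsProbabilityMeasure μ]
    {n m l : ℕ} (hn : 0 < n) (hm : 0 < m) (hl : 0 < l)
    (p : ℝ) (hp : 1 / 2 < p) (hp1 : p ≤ 1)
    (rx ry rz : ℝ) (hx0 : 0 < rx) (hx1 : rx ≤ 1) (hy0 : 0 < ry) (hy1 : ry ≤ 1)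
    (hz0 : 0 < rz) (hz1 : rz ≤ 1)
    (xb : Fin n → Bool) (yb : Fin m → Bool) (zb : Fin l → Bool)
    (hrx : ((Finset.univ.filter (fun i => xb i = true)).card : ℝ) = rx * n)
    (hry : ((Finset.univ.filter (fun j => yb j = true)).card : ℝ) = ry * m)
    (hrz : ((Finset.univ.filter (fun k => zb k = true)).card : ℝ) = rz * l)
    (C : Fin n × Fin m × Fin l → Ω → Bool)
    (hmeas : ∀ e, Measurable (C e))
    (hber : ∀ e, μ {ω | C e ω = true} = ENNReal.ofReal p)
    (hind : iIndepFun C μ) :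
    μ {ω | ∀ x y z, ¬(x = xb ∧ y = yb ∧ z = zb) →
          objCount (fun e => xor (C e ω) (xb e.1 && yb e.2.1 && zb e.2.2)) xb yb zb
            < objCount (fun e => xor (C e ω) (xb e.1 && yb e.2.1 && zb e.2.2)) x y z}
      ≤ ENNReal.ofReal
          (Real.exp (-2 * min (min (rx * n * (ry * m)) (rx * n * (rz * l))) (ry * m * (rz * l))
            * (p - 1 / 2) ^ 2)) :=
  stmt19_general μ p hp rx ry rz xb yb zb hrx hry hrz C hmeas hber hind
end
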